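/- CMP \ LF ⊆ PSL: if P is complete and not lock-free, then P is potentially self-locking, i.e., there exist an evaluation context E and a process Q such that P →* E[Q], Q is deadlocked (no reduction and not structurally equivalent to 0), and Q is top-complete. -/
import Mathlib


/-- Finite CCS processes: 0, input prefix a.P, output prefix ā.P, parallel. -/
inductive Proc : Type where
  | nil : Proc
  | inp : ℕ → Proc → Proc
  | out : ℕ → Proc → Proc
  | par : Proc → Proc → Proc

open Proc

/-- Structural equivalence: smallest congruence with unit, commutativity, associativity. -/
inductive StrEq : Proc → Proc → Prop where
  | refl (P) : StrEq P P
  | symm {P Q} : StrEq P Q → StrEq Q P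
  | trans {P Q R} : StrEq P Q → StrEq Q R → StrEq P R
  | nilPar (P) : StrEq (par P nil) P
  | comm (P Q) : StrEq (par P Q) (par Q P)
  | assoc (P Q R) : StrEq (par P (par Q R)) (par (par P Q) R)
  | congPar {P P' Q Q'} : StrEq P P' → StrEq Q Q' → StrEq (par P Q) (par P' Q')
  | congInp (a) {P P'} : StrEq P P' → StrEq (inp a P) (inp a P')
  | congOut (a) {P P'} : StrEq P P' → StrEq (out a P) (out a P')

/-- Reduction: a.P ‖ ā.Q → P ‖ Q, closed under parallel contexts and ≡. -/
inductive Red : Proc → Proc → Prop where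
  | comm (a P Q) : Red (par (inp a P) (out a Q)) (par P Q)
  | parL {P P'} (Q) : Red P P' → Red (par P Q) (par P' Q)
  | parR (P) {Q Q'} : Red Q Q' → Red (par P Q) (par P Q')
  | str {P P' Q Q'} : StrEq P P' → Red P' Q' → StrEq Q' Q → Red P Q

/-- Reflexive-transitive closure of reduction. -/
def Reds : Proc → Proc → Prop := Relation.ReflTransGen Red

/-- The set of names occurring in a process (ignoring polarity). -/
def names : Proc → Finset ℕ
  | nil => ∅
  | inp a P => insert a (names P)
  | out a P => insert a (names P)
  | par P Q => names P ∪ names Q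

/-- Number of input occurrences of a name. -/
def inCount (a : ℕ) : Proc → ℕ
  | nil => 0
  | inp b P => (if b = a then 1 else 0) + inCount a P
  | out _ P => inCount a P
  | par P Q => inCount a P + inCount a Q

/-- Number of output occurrences of a name. -/
def outCount (a : ℕ) : Proc → ℕ
  | nil => 0
  | inp _ P => outCount a P
  | out b P => (if b = a then 1 else 0) + outCount a P
  | par P Q => outCount a P + outCount a Q

/-- Linearity: each name occurs at most once as input and at most once as output. -/
def Linear (P : Proc) : Prop := ∀ a, inCount a P ≤ 1 ∧ outCount a P ≤ 1

/-- in(a,P): P ≡ P' ‖ a.P''. -/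
def InPred (a : ℕ) (P : Proc) : Prop := ∃ P' P'', StrEq P (par P' (inp a P''))

/-- out(a,P): P ≡ P' ‖ ā.P''. -/
def OutPred (a : ℕ) (P : Proc) : Prop := ∃ P' P'', StrEq P (par P' (out a P''))

/-- sync(a,P): both in(a,P) and out(a,P). -/
def SyncPred (a : ℕ) (P : Proc) : Prop := InPred a P ∧ OutPred a P

/-- wait(a,P): in(a,P) exclusive-or out(a,P). -/
def WaitPred (a : ℕ) (P : Proc) : Prop := Xor' (InPred a P) (OutPred a P)

/-- Process contexts C ::= [-] | P‖C | C‖P | α.C. -/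
inductive Ctx : Type where
  | hole : Ctx
  | parL : Proc → Ctx → Ctx
  | parR : Ctx → Proc → Ctx
  | inp : ℕ → Ctx → Ctx
  | out : ℕ → Ctx → Ctx

/-- Filling a process context. -/
def Ctx.fill : Ctx → Proc → Proc
  | .hole, Q => Q
  | .parL P C, Q => Proc.par P (C.fill Q)
  | .parR C P, Q => Proc.par (C.fill Q) P
  | .inp a C, Q => Proc.inp a (C.fill Q)
  | .out a C, Q => Proc.out a (C.fill Q)

/-- Evaluation contexts E ::= [-] | P‖E | E‖P. -/
inductive ECtx : Type where
  | hole : ECtx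
  | parL : Proc → ECtx → ECtx
  | parR : ECtx → Proc → ECtx

/-- Filling an evaluation context. -/
def ECtx.fill : ECtx → Proc → Proc
  | .hole, Q => Q
  | .parL P E, Q => Proc.par P (E.fill Q)
  | .parR E P, Q => Proc.par (E.fill Q) P

/-- cin(a,P): an input prefix on a occurs anywhere in P. -/
def CInPred (a : ℕ) (P : Proc) : Prop := ∃ (C : Ctx) (Q : Proc), StrEq P (C.fill Q) ∧ InPred a Q

/-- cout(a,P): an output prefix on a occurs anywhere in P. -/
def COutPred (a : ℕ) (P : Proc) : Prop := ∃ (C : Ctx) (Q : Proc), StrEq P (C.fill Q) ∧ OutPred a Q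

/-- P is complete: ∀a. cin(a,P) ⟺ cout(a,P). -/
def Complete (P : Proc) : Prop := ∀ a, CInPred a P ↔ COutPred a P

/-- P is top-complete. -/
def TopComplete (P : Proc) : Prop :=
  ∀ a, (InPred a P → COutPred a P) ∧ (OutPred a P → CInPred a P)

/-- dl(P): P has no reduction and P ≢ 0. -/
def Deadlock (P : Proc) : Prop := (¬ ∃ Q, Red P Q) ∧ ¬ StrEq P nil

/-- Lock-freedom. -/
def LockFree (P : Proc) : Prop :=
  ∀ Q a, Reds P Q → WaitPred a Q → ∃ R, Reds Q R ∧ SyncPred a R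

/-! ### Auxiliary lemmas -/

def psize : Proc → ℕ
  | nil => 0
  | inp _ P => 1 + psize P
  | out _ P => 1 + psize P
  | par P Q => psize P + psize Q

lemma streq_inCount {P Q} (h : StrEq P Q) : ∀ a, inCount a P = inCount a Q := by
  induction h <;> intro a <;> simp_all [inCount] <;> omega

lemma streq_outCount {P Q} (h : StrEq P Q) : ∀ a, outCount a P = outCount a Q := by
  induction h <;> intro a <;> simp_all [outCount] <;> omega

lemma streq_psize {P Q} (h : StrEq P Q) : psize P = psize Q := by
  induction h <;> simp_all [psize] <;> omega

lemma streq_swap (A X B : Proc) :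
    StrEq (par (par A X) B) (par (par A B) X) :=
  .trans (.symm (.assoc A X B)) (.trans (.congPar (.refl A) (.comm X B)) (.assoc A B X))

lemma streq_self_par (P : Proc) : StrEq P (par nil P) :=
  .symm (.trans (.comm nil P) (.nilPar P))

lemma inPred_streq {a P Q} (h : StrEq P Q) (hi : InPred a Q) : InPred a P := by
  obtain ⟨P', P'', hQ⟩ := hi; exact ⟨P', P'', .trans h hQ⟩

lemma outPred_streq {a P Q} (h : StrEq P Q) (ho : OutPred a Q) : OutPred a P := by
  obtain ⟨P', P'', hQ⟩ := ho; exact ⟨P', P'', .trans h hQ⟩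

lemma red_struct {S S'} (h : Red S S') :
    ∃ c, SyncPred c S ∧ ∀ b, inCount b S = (if c = b then 1 else 0) + inCount b S'
      ∧ outCount b S = (if c = b then 1 else 0) + outCount b S' := by
  induction h with
  | comm a P Q =>
      refine ⟨a, ⟨⟨out a Q, P, .comm _ _⟩, ⟨inp a P, Q, .refl _⟩⟩, ?_⟩
      intro b; constructor <;> simp [inCount, outCount] <;> omega
  | parL Q h ih =>
      obtain ⟨c, ⟨⟨A, A', hA⟩, ⟨B, B', hB⟩⟩, hcnt⟩ := ih
      refine ⟨c, ⟨⟨par A Q, A', .trans (.congPar hA (.refl Q)) (streq_swap A _ Q)⟩,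
        ⟨par B Q, B', .trans (.congPar hB (.refl Q)) (streq_swap B _ Q)⟩⟩, ?_⟩
      intro b; have := hcnt b; constructor <;> simp [inCount, outCount] <;> omega
  | parR P h ih =>
      obtain ⟨c, ⟨⟨A, A', hA⟩, ⟨B, B', hB⟩⟩, hcnt⟩ := ih
      refine ⟨c, ⟨⟨par P A, A', .trans (.congPar (.refl P) hA) (.assoc P A _)⟩,
        ⟨par P B, B', .trans (.congPar (.refl P) hB) (.assoc P B _)⟩⟩, ?_⟩
      intro b; have := hcnt b; constructor <;> simp [inCount, outCount] <;> omega
  | str h1 h2 h3 ih =>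
      obtain ⟨c, ⟨hi, ho⟩, hcnt⟩ := ih
      refine ⟨c, ⟨inPred_streq h1 hi, outPred_streq h1 ho⟩, ?_⟩
      intro b; have := hcnt b
      rw [streq_inCount h1 b, streq_outCount h1 b, ← streq_inCount h3 b, ← streq_outCount h3 b]
      exact this

lemma red_psize {S S'} (h : Red S S') : psize S = psize S' + 2 := by
  induction h with
  | comm a P Q => simp [psize]; omega
  | parL Q h ih => simp [psize]; omega
  | parR P h ih => simp [psize]; omega
  | str h1 h2 h3 ih => rw [streq_psize h1, ← streq_psize h3]; exact ih

lemma exists_nf (S : Proc) : ∃ N, Reds S N ∧ ∀ T, ¬ Red N T := by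
  have H : ∀ n S, psize S ≤ n → ∃ N, Reds S N ∧ ∀ T, ¬ Red N T := by
    intro n
    induction n with
    | zero =>
        intro S hS
        refine ⟨S, .refl, fun T hT => ?_⟩
        have := red_psize hT; omega
    | succ n ih =>
        intro S hS
        by_cases h : ∃ T, Red S T
        · obtain ⟨T, hT⟩ := h
          have hsz := red_psize hT
          obtain ⟨N, hN, hnf⟩ := ih T (by omega)
          exact ⟨N, .head hT hN, hnf⟩
        · exact ⟨S, .refl, fun T hT => h ⟨T, hT⟩⟩
  exact H (psize S) S le_rfl

lemma inPred_count {a P} (h : InPred a P) : 0 < inCount a P := by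
  obtain ⟨P', P'', hE⟩ := h
  rw [streq_inCount hE]; simp [inCount]

lemma outPred_count {a P} (h : OutPred a P) : 0 < outCount a P := by
  obtain ⟨P', P'', hE⟩ := h
  rw [streq_outCount hE]; simp [outCount]

lemma fill_inCount (a : ℕ) (C : Ctx) (Q : Proc) :
    inCount a Q ≤ inCount a (C.fill Q) := by
  induction C <;> simp [Ctx.fill, inCount] <;> omega

lemma fill_outCount (a : ℕ) (C : Ctx) (Q : Proc) :
    outCount a Q ≤ outCount a (C.fill Q) := by
  induction C <;> simp [Ctx.fill, outCount] <;> omega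

lemma cin_count {a P} (h : CInPred a P) : 0 < inCount a P := by
  obtain ⟨C, Q, hE, hI⟩ := h
  rw [streq_inCount hE]
  exact lt_of_lt_of_le (inPred_count hI) (fill_inCount a C Q)

lemma cout_count {a P} (h : COutPred a P) : 0 < outCount a P := by
  obtain ⟨C, Q, hE, hO⟩ := h
  rw [streq_outCount hE]
  exact lt_of_lt_of_le (outPred_count hO) (fill_outCount a C Q)

lemma count_cin {a : ℕ} : ∀ {P}, 0 < inCount a P → CInPred a P := by
  intro P
  induction P with
  | nil => simp [inCount]
  | inp b P ih =>
      intro h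
      by_cases hb : b = a
      · subst hb
        exact ⟨.hole, inp b P, .refl _, nil, P, streq_self_par _⟩
      · simp [inCount, hb] at h
        obtain ⟨C, Q, hE, hI⟩ := ih h
        exact ⟨.inp b C, Q, .congInp b hE, hI⟩
  | out b P ih =>
      intro h
      simp [inCount] at h
      obtain ⟨C, Q, hE, hI⟩ := ih h
      exact ⟨.out b C, Q, .congOut b hE, hI⟩
  | par P Q ihP ihQ =>
      intro h
      simp [inCount] at h
      by_cases hP : 0 < inCount a P
      · obtain ⟨C, R, hE, hI⟩ := ihP hP
        exact ⟨.parR C Q, R, .congPar hE (.refl Q), hI⟩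
      · have hQ : 0 < inCount a Q := by omega
        obtain ⟨C, R, hE, hI⟩ := ihQ hQ
        exact ⟨.parL P C, R, .congPar (.refl P) hE, hI⟩

lemma count_cout {a : ℕ} : ∀ {P}, 0 < outCount a P → COutPred a P := by
  intro P
  induction P with
  | nil => simp [outCount]
  | out b P ih =>
      intro h
      by_cases hb : b = a
      · subst hb
        exact ⟨.hole, out b P, .refl _, nil, P, streq_self_par _⟩
      · simp [outCount, hb] at h
        obtain ⟨C, Q, hE, hO⟩ := ih h
        exact ⟨.out b C, Q, .congOut b hE, hO⟩
  | inp b P ih =>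
      intro h
      simp [outCount] at h
      obtain ⟨C, Q, hE, hO⟩ := ih h
      exact ⟨.inp b C, Q, .congInp b hE, hO⟩
  | par P Q ihP ihQ =>
      intro h
      simp [outCount] at h
      by_cases hP : 0 < outCount a P
      · obtain ⟨C, R, hE, hO⟩ := ihP hP
        exact ⟨.parR C Q, R, .congPar hE (.refl Q), hO⟩
      · have hQ : 0 < outCount a Q := by omega
        obtain ⟨C, R, hE, hO⟩ := ihQ hQ
        exact ⟨.parL P C, R, .congPar (.refl P) hE, hO⟩

def BalancedP (P : Proc) : Prop := ∀ b, inCount b P = outCount b P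

lemma balancedP_red {S S'} (h : Red S S') (hB : BalancedP S) : BalancedP S' := by
  obtain ⟨c, _, hcnt⟩ := red_struct h
  intro b
  have := hcnt b
  have := hB b
  omega

lemma balancedP_reds {S S'} (h : Reds S S') (hB : BalancedP S) : BalancedP S' := by
  induction h with
  | refl => exact hB
  | tail _ hstep ih => exact balancedP_red hstep ih

/-- CMP \ LF ⊆ PSL. -/
theorem cmp_not_lf_psl {P : Proc} (hlin : Linear P) (hc : Complete P)
    (hnlf : ¬ LockFree P) :
    ∃ (E : ECtx) (Q : Proc), Reds P (E.fill Q) ∧ Deadlock Q ∧ TopComplete Q := by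
  -- P is balanced
  have hBalP : BalancedP P := by
    intro b
    have h1 := (hlin b).1
    have h2 := (hlin b).2
    rcases Nat.eq_zero_or_pos (inCount b P) with h | h
    · rcases Nat.eq_zero_or_pos (outCount b P) with h' | h'
      · omega
      · have := cin_count ((hc b).mpr (count_cout h'))
        omega
    · have := cout_count ((hc b).mp (count_cin h))
      omega
  -- extract the lock-freedom counterexample
  unfold LockFree at hnlf
  push_neg at hnlf
  obtain ⟨Q₀, a, hPQ₀, hwait, hnosync⟩ := hnlf
  -- reduce Q₀ to a normal form N
  obtain ⟨N, hQ₀N, hnf⟩ := exists_nf Q₀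
  have hBalQ₀ : BalancedP Q₀ := balancedP_reds hPQ₀ hBalP
  have hBalN : BalancedP N := balancedP_reds hQ₀N hBalQ₀
  -- inCount a Q₀ > 0
  have hQ₀pos : 0 < inCount a Q₀ := by
    rcases hwait with ⟨hi, _⟩ | ⟨ho, _⟩
    · exact inPred_count hi
    · have := outPred_count ho
      have := hBalQ₀ a
      omega
  -- inCount a is preserved along Q₀ →* N since no sync on a ever occurs
  have hpres : ∀ R, Reds Q₀ R → inCount a R = inCount a Q₀ := by
    intro R hR
    induction hR with
    | refl => rfl
    | @tail b c hsteps hstep ih =>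
        obtain ⟨d, hsync, hcnt⟩ := red_struct hstep
        have hda : d ≠ a := by
          intro h; subst h
          exact hnosync b hsteps hsync
        have := (hcnt a).1
        simp [hda] at this
        omega
  have hNpos : 0 < inCount a N := by rw [hpres N hQ₀N]; exact hQ₀pos
  refine ⟨.hole, N, Relation.ReflTransGen.trans hPQ₀ hQ₀N, ⟨?_, ?_⟩, ?_⟩
  · rintro ⟨T, hT⟩; exact hnf T hT
  · intro hnil
    have := streq_inCount hnil a
    simp [inCount] at this
    omega
  · intro b
    constructor
    · intro hi
      have : 0 < outCount b N := by
        have := inPred_count hi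
        have := hBalN b
        omega
      exact count_cout this
    · intro ho
      have : 0 < inCount b N := by
        have := outPred_count ho
        have := hBalN b
        omega
      exact count_cin this
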